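/- Fix an N×N real symmetric matrix Q, c_1,…,c_m > 0, and m-tuples of symmetric matrices A = (A_1,…,A_m), B = (B_1,…,B_m) with 0 < A_i ≤ B_i for all i. If f = (f_1,…,f_m) ∈ F_{A,B}, then BL(f)² ≥ I_{A,B} · BL(Conv f), where Conv f = (Conv f_1,…,Conv f_m) and Conv f_i(x) := 2^{n_i/2} (f_i ∗ f_i)(√2 x). -/

import Mathlib

open MeasureTheory Matrix Filter

/-- The (un-normalized) centered Gaussian `g_A(x) = exp(-(1/2)⟨Ax,x⟩)`. -/
noncomputable def gaussFn {ι : Type*} [Fintype ι] (A : Matrix ι ι ℝ) (x : ι → ℝ) : ℝ :=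
  Real.exp (-(1/2 : ℝ) * (x ⬝ᵥ A.mulVec x))

/-- A nonnegative function is log-concave if
`f(tx + (1-t)y) ≥ f(x)^t f(y)^(1-t)` for all `x, y` and `t ∈ [0,1]`. -/
def IsLogConcave {ι : Type*} (f : (ι → ℝ) → ℝ) : Prop :=
  (∀ x, 0 ≤ f x) ∧ ∀ x y : ι → ℝ, ∀ t : ℝ, 0 ≤ t → t ≤ 1 →
    f x ^ t * f y ^ (1 - t) ≤ f (t • x + (1 - t) • y)

/-- A nonnegative function is log-convex if
`f(tx + (1-t)y) ≤ f(x)^t f(y)^(1-t)` for all `x, y` and `t ∈ [0,1]`. -/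
def IsLogConvex {ι : Type*} (f : (ι → ℝ) → ℝ) : Prop :=
  (∀ x, 0 ≤ f x) ∧ ∀ x y : ι → ℝ, ∀ t : ℝ, 0 ≤ t → t ≤ 1 →
    f (t • x + (1 - t) • y) ≤ f x ^ t * f y ^ (1 - t)

/-- `f` is more log-concave than `g_A` if `f = g_A ⬝ h` with `h` log-concave. -/
def MoreLogConcaveThan {ι : Type*} [Fintype ι] (A : Matrix ι ι ℝ) (f : (ι → ℝ) → ℝ) : Prop :=
  ∃ h : (ι → ℝ) → ℝ, IsLogConcave h ∧ f = fun x => gaussFn A x * h x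

/-- `f` is more log-convex than `g_A` if `f = g_A ⬝ h` with `h` log-convex. -/
def MoreLogConvexThan {ι : Type*} [Fintype ι] (A : Matrix ι ι ℝ) (f : (ι → ℝ) → ℝ) : Prop :=
  ∃ h : (ι → ℝ) → ℝ, IsLogConvex h ∧ f = fun x => gaussFn A x * h x

/-- The Brascamp–Lieb functional
`BL(f) = (∫ e^{-(1/2)⟨Qx,x⟩} ∏ f_i(x_i)^{c_i} dx) / ∏ (∫ f_i)^{c_i}`. -/
noncomputable def BL {m : ℕ} {n : Fin m → ℕ}
    (Q : Matrix ((i : Fin m) × Fin (n i)) ((i : Fin m) × Fin (n i)) ℝ)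
    (c : Fin m → ℝ) (f : ∀ i, (Fin (n i) → ℝ) → ℝ) : ℝ :=
  (∫ x : ((i : Fin m) × Fin (n i)) → ℝ,
      Real.exp (-(1/2 : ℝ) * (x ⬝ᵥ Q.mulVec x)) * ∏ i, f i (fun j => x ⟨i, j⟩) ^ c i) /
    ∏ i, (∫ y : Fin (n i) → ℝ, f i y) ^ c i

/-- `f ∈ F_A`: each `f_i ∈ L¹(ℝ^{n_i}, ℝ₊)` is even, non-zero, and more log-concave
than `g_{A_i}`. -/
def memFA {m : ℕ} {n : Fin m → ℕ} (A : ∀ i, Matrix (Fin (n i)) (Fin (n i)) ℝ)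
    (f : ∀ i, (Fin (n i) → ℝ) → ℝ) : Prop :=
  ∀ i, Integrable (f i) ∧ (∀ x, 0 ≤ f i x) ∧ (∀ x, f i (-x) = f i x) ∧
    (0 < ∫ x : Fin (n i) → ℝ, f i x) ∧ MoreLogConcaveThan (A i) (f i)

/-- `f ∈ F_{A,B}`: each `f_i ∈ L¹(ℝ^{n_i}, ℝ₊)` is even, non-zero, more log-concave
than `g_{A_i}` and more log-convex than `g_{B_i}`. -/
def memFAB {m : ℕ} {n : Fin m → ℕ} (A B : ∀ i, Matrix (Fin (n i)) (Fin (n i)) ℝ)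
    (f : ∀ i, (Fin (n i) → ℝ) → ℝ) : Prop :=
  memFA A f ∧ ∀ i, MoreLogConvexThan (B i) (f i)

/-- The convolution `(f₁ ∗ f₂)(x) = ∫ f₁(x - y) f₂(y) dy`. -/
noncomputable def convFn {ι : Type*} [Fintype ι] (f₁ f₂ : (ι → ℝ) → ℝ) (x : ι → ℝ) : ℝ :=
  ∫ y : ι → ℝ, f₁ (x - y) * f₂ y

/-!
For `v = (v_i)` let `f^v_i(u) = f_i((u + v_i)/√2) f_i((u - v_i)/√2)`. The map
`(x, y) ↦ ((x + y)/√2, (x - y)/√2)` is an orthogonal involution, so it carries `g_A ⊗ g_A` to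
itself. Hence `f^v ∈ F_{A,B}` (log-concavity bounds `f_i`, log-convexity makes it positive),
and `∫ f^v_i = Conv f_i(v_i)` by an affine change of variables. Thus
`I_{A,B} · e^{-⟨Qv,v⟩/2} ∏ (Conv f_i(v_i))^{c_i}` is at most `e^{-⟨Qv,v⟩/2}` times the BL
numerator of `f^v`, whose integrand is the BL integrand of `f` at `(v + u)/√2` times the one at
`(v - u)/√2`. Integrating in `v` and applying the same change of variables on `ℝ^N × ℝ^N` bounds
`I_{A,B}` times the numerator of `BL(Conv f)` by the squared numerator of `BL(f)`; the
denominators match because `∫ Conv f_i = (∫ f_i)^2`.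
-/

open scoped ENNReal

lemma ofReal_integral_le_lintegral_ofReal {α : Type*} [MeasurableSpace α] {μ : Measure α}
    (f : α → ℝ) :
    ENNReal.ofReal (∫ a, f a ∂μ) ≤ ∫⁻ a, ENNReal.ofReal (f a) ∂μ := by
  by_cases hf : Integrable f μ
  · rw [integral_eq_lintegral_pos_part_sub_lintegral_neg_part hf]
    exact (ENNReal.ofReal_le_ofReal (sub_le_self _ ENNReal.toReal_nonneg)).trans
      ENNReal.ofReal_toReal_le
  · simp [integral_undef hf]

section LogConcavity

variable {ι : Type*}

lemma Real.rpow_mul_rpow_one_sub {k : ℝ} (hk : 0 < k) (t : ℝ) : k ^ t * k ^ (1 - t) = k := by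
  rw [← Real.rpow_add hk, add_sub_cancel, Real.rpow_one]

lemma isLogConcave_const {k : ℝ} (hk : 0 < k) : IsLogConcave fun _ : ι → ℝ => k :=
  ⟨fun _ => hk.le, fun _ _ t _ _ => (Real.rpow_mul_rpow_one_sub hk t).le⟩

lemma isLogConvex_const {k : ℝ} (hk : 0 < k) : IsLogConvex fun _ : ι → ℝ => k :=
  ⟨fun _ => hk.le, fun _ _ t _ _ => (Real.rpow_mul_rpow_one_sub hk t).ge⟩

lemma IsLogConcave.mul {h₁ h₂ : (ι → ℝ) → ℝ} (H₁ : IsLogConcave h₁)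
    (H₂ : IsLogConcave h₂) : IsLogConcave fun x => h₁ x * h₂ x := by
  refine ⟨fun x => mul_nonneg (H₁.1 x) (H₂.1 x), fun x y t ht₀ ht₁ => ?_⟩
  calc (h₁ x * h₂ x) ^ t * (h₁ y * h₂ y) ^ (1 - t)
      = (h₁ x ^ t * h₁ y ^ (1 - t)) * (h₂ x ^ t * h₂ y ^ (1 - t)) := by
        rw [Real.mul_rpow (H₁.1 x) (H₂.1 x), Real.mul_rpow (H₁.1 y) (H₂.1 y)]; ring
    _ ≤ _ := mul_le_mul (H₁.2 x y t ht₀ ht₁) (H₂.2 x y t ht₀ ht₁)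
        (mul_nonneg (Real.rpow_nonneg (H₂.1 x) _) (Real.rpow_nonneg (H₂.1 y) _)) (H₁.1 _)

lemma IsLogConvex.mul {h₁ h₂ : (ι → ℝ) → ℝ} (H₁ : IsLogConvex h₁)
    (H₂ : IsLogConvex h₂) : IsLogConvex fun x => h₁ x * h₂ x := by
  refine ⟨fun x => mul_nonneg (H₁.1 x) (H₂.1 x), fun x y t ht₀ ht₁ => ?_⟩
  calc h₁ (t • x + (1 - t) • y) * h₂ (t • x + (1 - t) • y)
      ≤ (h₁ x ^ t * h₁ y ^ (1 - t)) * (h₂ x ^ t * h₂ y ^ (1 - t)) :=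
        mul_le_mul (H₁.2 x y t ht₀ ht₁) (H₂.2 x y t ht₀ ht₁) (H₂.1 _)
          (mul_nonneg (Real.rpow_nonneg (H₁.1 x) _) (Real.rpow_nonneg (H₁.1 y) _))
    _ = (h₁ x * h₂ x) ^ t * (h₁ y * h₂ y) ^ (1 - t) := by
        rw [Real.mul_rpow (H₁.1 x) (H₂.1 x), Real.mul_rpow (H₁.1 y) (H₂.1 y)]; ring

lemma smul_convexCombo_add (r t : ℝ) (x y b : ι → ℝ) :
    r • (t • x + (1 - t) • y) + b = t • (r • x + b) + (1 - t) • (r • y + b) := by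
  module

lemma IsLogConcave.comp_smul_add {h : (ι → ℝ) → ℝ} (H : IsLogConcave h) (r : ℝ)
    (b : ι → ℝ) : IsLogConcave fun x => h (r • x + b) :=
  ⟨fun _ => H.1 _, fun x y t ht₀ ht₁ => by
    simpa only [smul_convexCombo_add] using H.2 _ _ t ht₀ ht₁⟩

lemma IsLogConvex.comp_smul_add {h : (ι → ℝ) → ℝ} (H : IsLogConvex h) (r : ℝ)
    (b : ι → ℝ) : IsLogConvex fun x => h (r • x + b) :=
  ⟨fun _ => H.1 _, fun x y t ht₀ ht₁ => by
    simpa only [smul_convexCombo_add] using H.2 _ _ t ht₀ ht₁⟩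

lemma IsLogConcave.le_apply_zero {f : (ι → ℝ) → ℝ} (hf : IsLogConcave f)
    (heven : ∀ x, f (-x) = f x) (x : ι → ℝ) : f x ≤ f 0 := by
  have h := hf.2 x (-x) (1 / 2) (by norm_num) (by norm_num)
  rwa [heven, ← Real.rpow_add' (hf.1 x) (by norm_num), add_sub_cancel, Real.rpow_one,
    show (1 / 2 : ℝ) • x + (1 - 1 / 2 : ℝ) • -x = 0 by module] at h

lemma IsLogConvex.eq_zero_of_apply_eq_zero {h : (ι → ℝ) → ℝ} (hh : IsLogConvex h)
    {x₀ : ι → ℝ} (hx₀ : h x₀ = 0) (x : ι → ℝ) : h x = 0 := by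
  have h := hh.2 x₀ ((2 : ℝ) • x - x₀) (1 / 2) (by norm_num) (by norm_num)
  rw [show (1 / 2 : ℝ) • x₀ + (1 - 1 / 2 : ℝ) • ((2 : ℝ) • x - x₀) = x by module,
    hx₀, Real.zero_rpow (by norm_num), zero_mul] at h
  exact le_antisymm h (hh.1 x)

end LogConcavity

section Gaussian

variable {ι : Type*} [Fintype ι]

lemma gaussFn_pos (A : Matrix ι ι ℝ) (x : ι → ℝ) : 0 < gaussFn A x := Real.exp_pos _

lemma isLogConcave_gaussFn {A : Matrix ι ι ℝ} (hA : A.PosSemidef) :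
    IsLogConcave (gaussFn A) := by
  refine ⟨fun x => (gaussFn_pos A x).le, fun x y t ht₀ ht₁ => ?_⟩
  have hxy : 0 ≤ (x - y) ⬝ᵥ A *ᵥ (x - y) := by
    simpa using hA.dotProduct_mulVec_nonneg (x - y)
  have hconv : t * (x ⬝ᵥ A *ᵥ x) + (1 - t) * (y ⬝ᵥ A *ᵥ y)
      - (t • x + (1 - t) • y) ⬝ᵥ A *ᵥ (t • x + (1 - t) • y)
      = t * (1 - t) * ((x - y) ⬝ᵥ A *ᵥ (x - y)) := by
    simp only [mulVec_add, mulVec_sub, mulVec_smul, add_dotProduct, sub_dotProduct,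
      dotProduct_add, dotProduct_sub, smul_dotProduct, dotProduct_smul, smul_eq_mul]
    ring
  simp only [gaussFn, ← Real.exp_mul, ← Real.exp_add]
  gcongr
  nlinarith [mul_nonneg (mul_nonneg ht₀ (sub_nonneg.2 ht₁)) hxy]

lemma MoreLogConcaveThan.isLogConcave {A : Matrix ι ι ℝ} {f : (ι → ℝ) → ℝ}
    (hf : MoreLogConcaveThan A f) (hA : A.PosSemidef) : IsLogConcave f := by
  obtain ⟨h, hh, rfl⟩ := hf
  exact (isLogConcave_gaussFn hA).mul hh

lemma MoreLogConvexThan.pos {B : Matrix ι ι ℝ} {f : (ι → ℝ) → ℝ}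
    (hf : MoreLogConvexThan B f) (hint : 0 < ∫ x, f x) (x : ι → ℝ) : 0 < f x := by
  obtain ⟨h, hh, rfl⟩ := hf
  refine mul_pos (gaussFn_pos B x) ((hh.1 x).lt_of_ne' fun hx => hint.ne' ?_)
  simp [hh.eq_zero_of_apply_eq_zero hx]

lemma gaussFn_mul_gaussFn_hadamard (A : Matrix ι ι ℝ) (u a : ι → ℝ) :
    gaussFn A ((√2)⁻¹ • (u + a)) * gaussFn A ((√2)⁻¹ • (u - a))
      = gaussFn A u * gaussFn A a := by
  have h : (√2)⁻¹ * (√2)⁻¹ = (2 : ℝ)⁻¹ := by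
    rw [← mul_inv, Real.mul_self_sqrt zero_le_two]
  simp only [gaussFn, ← Real.exp_add]
  congr 1
  simp only [mulVec_add, mulVec_sub, mulVec_smul, add_dotProduct, sub_dotProduct,
    dotProduct_add, dotProduct_sub, smul_dotProduct, dotProduct_smul, smul_eq_mul]
  linear_combination (-(u ⬝ᵥ A *ᵥ u) - a ⬝ᵥ A *ᵥ a) * h

end Gaussian

section HadamardPair

variable {ι : Type*}

noncomputable def hadamardPair (f : (ι → ℝ) → ℝ) (a u : ι → ℝ) : ℝ :=
  f ((√2)⁻¹ • (u + a)) * f ((√2)⁻¹ • (u - a))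

lemma hadamardPair_neg {f : (ι → ℝ) → ℝ} (heven : ∀ x, f (-x) = f x) (a u : ι → ℝ) :
    hadamardPair f a (-u) = hadamardPair f a u := by
  rw [hadamardPair, hadamardPair,
    show (√2)⁻¹ • (-u + a) = -((√2)⁻¹ • (u - a)) by module,
    show (√2)⁻¹ • (-u - a) = -((√2)⁻¹ • (u + a)) by module, heven, heven, mul_comm]

lemma IsLogConcave.hadamardPair {h : (ι → ℝ) → ℝ} (H : IsLogConcave h) (a : ι → ℝ) :
    IsLogConcave (hadamardPair h a) := by
  convert (H.comp_smul_add (√2)⁻¹ ((√2)⁻¹ • a)).mul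
    (H.comp_smul_add (√2)⁻¹ (-((√2)⁻¹ • a))) using 2 with u
  rw [_root_.hadamardPair, smul_add, smul_sub, sub_eq_add_neg]

lemma IsLogConvex.hadamardPair {h : (ι → ℝ) → ℝ} (H : IsLogConvex h) (a : ι → ℝ) :
    IsLogConvex (hadamardPair h a) := by
  convert (H.comp_smul_add (√2)⁻¹ ((√2)⁻¹ • a)).mul
    (H.comp_smul_add (√2)⁻¹ (-((√2)⁻¹ • a))) using 2 with u
  rw [_root_.hadamardPair, smul_add, smul_sub, sub_eq_add_neg]

variable [Fintype ι]

lemma hadamardPair_gaussFn_mul (A : Matrix ι ι ℝ) (h : (ι → ℝ) → ℝ) (a : ι → ℝ) :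
    hadamardPair (fun x => gaussFn A x * h x) a
      = fun u => gaussFn A u * (gaussFn A a * hadamardPair h a u) := by
  ext u
  simp only [hadamardPair]
  linear_combination (h ((√2)⁻¹ • (u + a)) * h ((√2)⁻¹ • (u - a))) *
    gaussFn_mul_gaussFn_hadamard A u a

lemma MoreLogConcaveThan.hadamardPair {A : Matrix ι ι ℝ} {f : (ι → ℝ) → ℝ}
    (hf : MoreLogConcaveThan A f) (a : ι → ℝ) : MoreLogConcaveThan A (hadamardPair f a) := by
  obtain ⟨h, hh, rfl⟩ := hf
  exact ⟨_, (isLogConcave_const (gaussFn_pos A a)).mul (hh.hadamardPair a),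
    hadamardPair_gaussFn_mul A h a⟩

lemma MoreLogConvexThan.hadamardPair {B : Matrix ι ι ℝ} {f : (ι → ℝ) → ℝ}
    (hf : MoreLogConvexThan B f) (a : ι → ℝ) : MoreLogConvexThan B (hadamardPair f a) := by
  obtain ⟨h, hh, rfl⟩ := hf
  exact ⟨_, (isLogConvex_const (gaussFn_pos B a)).mul (hh.hadamardPair a),
    hadamardPair_gaussFn_mul B h a⟩

lemma integrable_hadamardPair {f : (ι → ℝ) → ℝ} (hf : Integrable f) {M : ℝ}
    (hM : ∀ x, ‖f x‖ ≤ M) (a : ι → ℝ) : Integrable (hadamardPair f a) := by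
  have hs : (√2)⁻¹ ≠ 0 := by positivity
  exact ((hf.comp_smul hs).comp_sub_right a).bdd_mul
    ((hf.comp_smul hs).comp_add_right a).aestronglyMeasurable (ae_of_all _ fun _ => hM _)

lemma integral_hadamardPair_pos {f : (ι → ℝ) → ℝ} (hpos : ∀ x, 0 < f x) {a : ι → ℝ}
    (hint : Integrable (hadamardPair f a)) : 0 < ∫ u, hadamardPair f a u := by
  have hsupp : Function.support (hadamardPair f a) = Set.univ :=
    Set.eq_univ_of_forall fun u => (mul_pos (hpos _) (hpos _)).ne'
  have hnonneg : 0 ≤ hadamardPair f a := fun u => (mul_pos (hpos _) (hpos _)).le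
  rw [integral_pos_iff_support_of_nonneg hnonneg hint, hsupp]
  exact Measure.measure_univ_pos.2 (NeZero.ne _)

end HadamardPair

section SelfConvolution

variable {d : ℕ}

/-- `Conv f` of the paper. -/
noncomputable def selfConv (f : (Fin d → ℝ) → ℝ) (x : Fin d → ℝ) : ℝ :=
  (2 : ℝ) ^ ((d : ℝ) / 2) * convFn f f (√2 • x)

lemma two_rpow_half_eq_sqrt_two_pow (d : ℕ) : (2 : ℝ) ^ ((d : ℝ) / 2) = √2 ^ d := by
  rw [Real.sqrt_eq_rpow, ← Real.rpow_natCast, ← Real.rpow_mul zero_le_two, one_div_mul_eq_div]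

lemma integral_convFn {ι : Type*} [Fintype ι] {f g : (ι → ℝ) → ℝ} (hf : Integrable f)
    (hg : Integrable g) : ∫ x, convFn f g x = (∫ x, f x) * ∫ x, g x := by
  have : convFn f g = convolution g f (ContinuousLinearMap.mul ℝ ℝ) volume := by
    ext x; simp [convFn, convolution, mul_comm]
  rw [this, integral_convolution _ hg hf, ContinuousLinearMap.mul_apply', mul_comm]

lemma integral_selfConv {f : (Fin d → ℝ) → ℝ} (hf : Integrable f) :
    ∫ x, selfConv f x = (∫ x, f x) ^ 2 := by
  rw [show selfConv f = fun x => √2 ^ d * convFn f f (√2 • x) by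
      ext x; rw [selfConv, two_rpow_half_eq_sqrt_two_pow],
    integral_const_mul,
    Measure.integral_comp_smul_of_nonneg volume (convFn f f) √2 (hR := Real.sqrt_nonneg 2),
    Module.finrank_fin_fun, smul_eq_mul, mul_inv_cancel_left₀ (by positivity),
    integral_convFn hf hf, sq]

lemma integral_hadamardPair {f : (Fin d → ℝ) → ℝ} (heven : ∀ x, f (-x) = f x)
    (a : Fin d → ℝ) : ∫ u, hadamardPair f a u = selfConv f a := by
  have hsqrt : √2 = 2 * (√2)⁻¹ := by
    field_simp; exact Real.sq_sqrt zero_le_two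
  set H : (Fin d → ℝ) → ℝ := fun y => f (√2 • a - y) * f y
  have hH : hadamardPair f a = fun u => H ((√2)⁻¹ • (u + a)) := by
    ext u
    rw [hadamardPair, mul_comm, ← heven ((√2)⁻¹ • (u - a))]
    congr 2
    rw [show √2 • a = (2 * (√2)⁻¹) • a from congrArg (· • a) hsqrt]
    module
  rw [hH, integral_add_right_eq_self (fun u => H ((√2)⁻¹ • u)) a,
    Measure.integral_comp_inv_smul_of_nonneg volume H (Real.sqrt_nonneg 2), Module.finrank_fin_fun,
    selfConv, two_rpow_half_eq_sqrt_two_pow, smul_eq_mul]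
  rfl

end SelfConvolution

section HadamardMap

variable (E : Type*) [NormedAddCommGroup E] [NormedSpace ℝ E]

noncomputable def hadamardMap : (E × E) →ₗ[ℝ] (E × E) :=
  (√2)⁻¹ • ((LinearMap.fst ℝ E E + LinearMap.snd ℝ E E).prod
    (LinearMap.fst ℝ E E - LinearMap.snd ℝ E E))

variable {E}

@[simp] lemma hadamardMap_apply (p : E × E) :
    hadamardMap E p = ((√2)⁻¹ • (p.1 + p.2), (√2)⁻¹ • (p.1 - p.2)) := rfl

lemma hadamardMap_involutive : Function.Involutive (hadamardMap E) := by
  have h : (√2)⁻¹ * (√2)⁻¹ = (2 : ℝ)⁻¹ := by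
    rw [← mul_inv, Real.mul_self_sqrt zero_le_two]
  intro p
  ext <;> simp only [hadamardMap_apply, ← smul_add, ← smul_sub, smul_smul, h] <;> module

variable [FiniteDimensional ℝ E] [MeasurableSpace E] [BorelSpace E]

variable (μ : Measure E) [μ.IsAddHaarMeasure]

lemma measurePreserving_hadamardMap :
    MeasurePreserving (hadamardMap E) (μ.prod μ) (μ.prod μ) := by
  have hdet : LinearMap.det (hadamardMap E) * LinearMap.det (hadamardMap E) = 1 := by
    rw [← LinearMap.det_comp,
      show hadamardMap E ∘ₗ hadamardMap E = LinearMap.id from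
        LinearMap.ext hadamardMap_involutive,
      LinearMap.det_id]
  refine ⟨(hadamardMap E).continuous_of_finiteDimensional.measurable, ?_⟩
  rw [Measure.map_linearMap_addHaar_eq_smul_addHaar _ (left_ne_zero_of_mul_eq_one hdet)]
  rcases mul_self_eq_one_iff.1 hdet with h | h <;> simp [h]

variable {μ}

lemma lintegral_lintegral_hadamardMap_mul {G : E → ℝ≥0∞} (hG : AEMeasurable G μ) :
    ∫⁻ v, ∫⁻ u, G ((√2)⁻¹ • (v + u)) * G ((√2)⁻¹ • (v - u)) ∂μ ∂μ
      = (∫⁻ x, G x ∂μ) ^ 2 := by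
  have hGG : AEMeasurable (fun p : E × E => G p.1 * G p.2) (μ.prod μ) :=
    (hG.comp_quasiMeasurePreserving Measure.quasiMeasurePreserving_fst).mul
      (hG.comp_quasiMeasurePreserving Measure.quasiMeasurePreserving_snd)
  have hH := measurePreserving_hadamardMap μ
  calc ∫⁻ v, ∫⁻ u, G ((√2)⁻¹ • (v + u)) * G ((√2)⁻¹ • (v - u)) ∂μ ∂μ
      = ∫⁻ p, G (hadamardMap E p).1 * G (hadamardMap E p).2 ∂(μ.prod μ) :=
        (lintegral_prod _ (hGG.comp_quasiMeasurePreserving hH.quasiMeasurePreserving)).symm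
    _ = ∫⁻ q, G q.1 * G q.2 ∂(μ.prod μ) :=
        hH.lintegral_comp_emb (MeasurableEquiv.ofInvolutive _ hadamardMap_involutive
          hH.measurable).measurableEmbedding fun q => G q.1 * G q.2
    _ = (∫⁻ x, G x ∂μ) ^ 2 := by rw [lintegral_prod_mul hG hG, sq]

lemma integral_le_sq_integral_of_le_integral_hadamard {F K : E → ℝ} (hF : Integrable F μ)
    (hF₀ : 0 ≤ F)
    (hK : ∀ v, K v ≤ ∫ u, F ((√2)⁻¹ • (v + u)) * F ((√2)⁻¹ • (v - u)) ∂μ) :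
    ∫ v, K v ∂μ ≤ (∫ x, F x ∂μ) ^ 2 := by
  rw [← ENNReal.ofReal_le_ofReal_iff (sq_nonneg _), ENNReal.ofReal_pow (integral_nonneg hF₀),
    ofReal_integral_eq_lintegral_ofReal hF (ae_of_all _ hF₀),
    ← lintegral_lintegral_hadamardMap_mul hF.aemeasurable.ennreal_ofReal]
  refine (ofReal_integral_le_lintegral_ofReal K).trans (lintegral_mono fun v => ?_)
  calc ENNReal.ofReal (K v)
      ≤ ENNReal.ofReal (∫ u, F ((√2)⁻¹ • (v + u)) * F ((√2)⁻¹ • (v - u)) ∂μ) :=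
        ENNReal.ofReal_le_ofReal (hK v)
    _ ≤ _ := (ofReal_integral_le_lintegral_ofReal _).trans_eq
        (lintegral_congr fun u => ENNReal.ofReal_mul (hF₀ _))

end HadamardMap

section BrascampLieb

variable {m : ℕ} {n : Fin m → ℕ}
  (Q : Matrix ((i : Fin m) × Fin (n i)) ((i : Fin m) × Fin (n i)) ℝ) (c : Fin m → ℝ)

noncomputable def blIntegrand (f : ∀ i, (Fin (n i) → ℝ) → ℝ)
    (x : ((i : Fin m) × Fin (n i)) → ℝ) : ℝ :=
  gaussFn Q x * ∏ i, f i (fun j => x ⟨i, j⟩) ^ c i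

noncomputable def blDenom (f : ∀ i, (Fin (n i) → ℝ) → ℝ) : ℝ :=
  ∏ i, (∫ y, f i y) ^ c i

lemma BL_eq_integral_div (f : ∀ i, (Fin (n i) → ℝ) → ℝ) :
    BL Q c f = (∫ x, blIntegrand Q c f x) / blDenom c f := rfl

variable {Q c}

lemma blIntegrand_nonneg {f : ∀ i, (Fin (n i) → ℝ) → ℝ} (hf : ∀ i x, 0 ≤ f i x)
    (x : ((i : Fin m) × Fin (n i)) → ℝ) : 0 ≤ blIntegrand Q c f x :=
  mul_nonneg (gaussFn_pos Q x).le (Finset.prod_nonneg fun i _ => Real.rpow_nonneg (hf i _) _)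

lemma BL_nonneg {f : ∀ i, (Fin (n i) → ℝ) → ℝ} (hf : ∀ i x, 0 ≤ f i x) :
    0 ≤ BL Q c f :=
  div_nonneg (integral_nonneg (blIntegrand_nonneg hf))
    (Finset.prod_nonneg fun i _ => Real.rpow_nonneg (integral_nonneg (hf i)) _)

lemma blDenom_pos {f : ∀ i, (Fin (n i) → ℝ) → ℝ} (hf : ∀ i, 0 < ∫ y, f i y) :
    0 < blDenom c f :=
  Finset.prod_pos fun i _ => Real.rpow_pos_of_pos (hf i) _

noncomputable def hadamardPairFam (f : ∀ i, (Fin (n i) → ℝ) → ℝ)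
    (v : ((i : Fin m) × Fin (n i)) → ℝ) (i : Fin m) : (Fin (n i) → ℝ) → ℝ :=
  hadamardPair (f i) fun j => v ⟨i, j⟩

lemma memFAB_hadamardPairFam {A B : ∀ i, Matrix (Fin (n i)) (Fin (n i)) ℝ}
    (hA : ∀ i, (A i).PosSemidef) {f : ∀ i, (Fin (n i) → ℝ) → ℝ} (hf : memFAB A B f)
    (v : ((i : Fin m) × Fin (n i)) → ℝ) : memFAB A B (hadamardPairFam f v) := by
  refine ⟨fun i => ?_, fun i => (hf.2 i).hadamardPair _⟩
  obtain ⟨hint, hnonneg, heven, hpos, hconc⟩ := hf.1 i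
  have hbdd : ∀ x, ‖f i x‖ ≤ f i 0 := fun x => by
    rw [Real.norm_of_nonneg (hnonneg x)]
    exact (hconc.isLogConcave (hA i)).le_apply_zero heven x
  have hint' := integrable_hadamardPair hint hbdd fun j => v ⟨i, j⟩
  exact ⟨hint', fun x => mul_nonneg (hnonneg _) (hnonneg _), hadamardPair_neg heven _,
    integral_hadamardPair_pos ((hf.2 i).pos hpos) hint', hconc.hadamardPair _⟩

lemma blIntegrand_hadamard_mul {f : ∀ i, (Fin (n i) → ℝ) → ℝ} (hf : ∀ i x, 0 ≤ f i x)
    (heven : ∀ i x, f i (-x) = f i x) (v u : ((i : Fin m) × Fin (n i)) → ℝ) :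
    blIntegrand Q c f ((√2)⁻¹ • (v + u)) * blIntegrand Q c f ((√2)⁻¹ • (v - u))
      = gaussFn Q v * blIntegrand Q c (hadamardPairFam f v) u := by
  have hprod : ∀ i, f i (fun j => ((√2)⁻¹ • (v + u)) ⟨i, j⟩) ^ c i
      * f i (fun j => ((√2)⁻¹ • (v - u)) ⟨i, j⟩) ^ c i
      = hadamardPairFam f v i (fun j => u ⟨i, j⟩) ^ c i := fun i => by
    rw [← Real.mul_rpow (hf i _) (hf i _), hadamardPairFam, hadamardPair,
      ← heven i fun j => ((√2)⁻¹ • (v - u)) ⟨i, j⟩]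
    congr 3 <;> ext j <;>
      simp only [Pi.smul_apply, Pi.add_apply, Pi.sub_apply, Pi.neg_apply] <;> ring
  simp only [blIntegrand]
  rw [mul_mul_mul_comm, gaussFn_mul_gaussFn_hadamard, ← Finset.prod_mul_distrib,
    Finset.prod_congr rfl fun i _ => hprod i]
  ring

lemma blIntegrand_selfConv {f : ∀ i, (Fin (n i) → ℝ) → ℝ}
    (heven : ∀ i x, f i (-x) = f i x) (v : ((i : Fin m) × Fin (n i)) → ℝ) :
    blIntegrand Q c (fun i => selfConv (f i)) v
      = gaussFn Q v * blDenom c (hadamardPairFam f v) := by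
  simp only [blIntegrand, blDenom, hadamardPairFam, integral_hadamardPair (heven _)]

lemma blDenom_selfConv {f : ∀ i, (Fin (n i) → ℝ) → ℝ} (hint : ∀ i, Integrable (f i))
    (hf : ∀ i x, 0 ≤ f i x) : blDenom c (fun i => selfConv (f i)) = blDenom c f ^ 2 := by
  simp only [blDenom, integral_selfConv (hint _), ← Finset.prod_pow,
    Real.rpow_pow_comm (integral_nonneg (hf _))]

lemma mul_integral_blIntegrand_selfConv_le {f : ∀ i, (Fin (n i) → ℝ) → ℝ}
    (hf : ∀ i x, 0 ≤ f i x) (heven : ∀ i x, f i (-x) = f i x)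
    (hint : Integrable (blIntegrand Q c f)) {I : ℝ}
    (hI : ∀ v, I * blDenom c (hadamardPairFam f v)
      ≤ ∫ u, blIntegrand Q c (hadamardPairFam f v) u) :
    I * ∫ v, blIntegrand Q c (fun i => selfConv (f i)) v
      ≤ (∫ x, blIntegrand Q c f x) ^ 2 := by
  rw [← integral_const_mul]
  refine integral_le_sq_integral_of_le_integral_hadamard hint (blIntegrand_nonneg hf) fun v => ?_
  calc I * blIntegrand Q c (fun i => selfConv (f i)) v
      = gaussFn Q v * (I * blDenom c (hadamardPairFam f v)) := by
        rw [blIntegrand_selfConv heven]; ring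
    _ ≤ gaussFn Q v * ∫ u, blIntegrand Q c (hadamardPairFam f v) u :=
        mul_le_mul_of_nonneg_left (hI v) (gaussFn_pos Q v).le
    _ = ∫ u, blIntegrand Q c f ((√2)⁻¹ • (v + u))
          * blIntegrand Q c f ((√2)⁻¹ • (v - u)) := by
        rw [← integral_const_mul]
        simp only [blIntegrand_hadamard_mul hf heven]

end BrascampLieb

theorem BL_sq_ge_inf_mul_BL_conv_general
    (m : ℕ) (n : Fin m → ℕ)
    (Q : Matrix ((i : Fin m) × Fin (n i)) ((i : Fin m) × Fin (n i)) ℝ)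
    (c : Fin m → ℝ)
    (A B : ∀ i, Matrix (Fin (n i)) (Fin (n i)) ℝ)
    (hA : ∀ i, (A i).PosDef)
    (f : ∀ i, (Fin (n i) → ℝ) → ℝ) (hf : memFAB A B f) :
    sInf {r : ℝ | ∃ g, memFAB A B g ∧ r = BL Q c g} *
        BL Q c (fun i x => (2 : ℝ) ^ ((n i : ℝ) / 2) * convFn (f i) (f i) (Real.sqrt 2 • x))
      ≤ (BL Q c f) ^ 2 := by
  set I := sInf {r : ℝ | ∃ g, memFAB A B g ∧ r = BL Q c g}
  have hBL_nonneg : ∀ r ∈ {r : ℝ | ∃ g, memFAB A B g ∧ r = BL Q c g}, 0 ≤ r := by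
    rintro _ ⟨g, hg, rfl⟩
    exact BL_nonneg fun i => (hg.1 i).2.1
  have hI_le : ∀ g, memFAB A B g → I ≤ BL Q c g := fun g hg =>
    csInf_le ⟨0, hBL_nonneg⟩ ⟨g, hg, rfl⟩
  have hnonneg : ∀ i x, 0 ≤ f i x := fun i => (hf.1 i).2.1
  by_cases hint : Integrable (blIntegrand Q c f)
  · have hpair : ∀ v, memFAB A B (hadamardPairFam f v) :=
      memFAB_hadamardPairFam (fun i => (hA i).posSemidef) hf
    have key := mul_integral_blIntegrand_selfConv_le hnonneg (fun i => (hf.1 i).2.2.1) hint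
      fun v => (le_div_iff₀ (blDenom_pos fun i => ((hpair v).1 i).2.2.2.1)).1 (hI_le _ (hpair v))
    change I * BL Q c (fun i => selfConv (f i)) ≤ _
    rw [BL_eq_integral_div, BL_eq_integral_div, blDenom_selfConv (fun i => (hf.1 i).1) hnonneg,
      div_pow, ← mul_div_assoc]
    exact div_le_div_of_nonneg_right key (sq_nonneg _)
  · -- a non-integrable integral is `0` in Lean, so here `BL f = 0`, which forces `I = 0`
    have hBL : BL Q c f = 0 := by rw [BL_eq_integral_div, integral_undef hint, zero_div]
    have hI : I = 0 := le_antisymm (hBL ▸ hI_le f hf) (Real.sInf_nonneg hBL_nonneg)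
    rw [hI, hBL, zero_mul, sq, mul_zero]

/-- Step 2 of the Nakamura–Tsuji scheme: for `f ∈ F_{A,B}` with `0 < A_i ≤ B_i`,
`BL(f)² ≥ I_{A,B} ⬝ BL(Conv f)`, where `Conv f_i = 2^{n_i/2}(f_i ∗ f_i)(√2 ⬝)` and
`I_{A,B} = inf_{g ∈ F_{A,B}} BL(g)`. -/
theorem BL_sq_ge_inf_mul_BL_conv
    (m : ℕ) (n : Fin m → ℕ)
    (Q : Matrix ((i : Fin m) × Fin (n i)) ((i : Fin m) × Fin (n i)) ℝ) (hQ : Q.IsSymm)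
    (c : Fin m → ℝ) (hc : ∀ i, 0 < c i)
    (A B : ∀ i, Matrix (Fin (n i)) (Fin (n i)) ℝ)
    (hA : ∀ i, (A i).PosDef) (hBsymm : ∀ i, (B i).IsSymm)
    (hAB : ∀ i, (B i - A i).PosSemidef)
    (f : ∀ i, (Fin (n i) → ℝ) → ℝ) (hf : memFAB A B f) :
    sInf {r : ℝ | ∃ g, memFAB A B g ∧ r = BL Q c g} *
        BL Q c (fun i x => (2 : ℝ) ^ ((n i : ℝ) / 2) * convFn (f i) (f i) (Real.sqrt 2 • x))
      ≤ (BL Q c f) ^ 2 :=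
  BL_sq_ge_inf_mul_BL_conv_general m n Q c A B hA f hf
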